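/- Let T > 0, (Ω, 𝔉, P) a probability space, and let V, V̂ⁿ : [0,T] × Ω → ℝ (n ∈ ℕ) be jointly measurable processes. Fix x ∈ ℝ and suppose: (i) for every t ∈ [0,T], V̂ⁿ_t → V_t in probability as n → ∞; and (ii) P(V_t = x) = 0 for Lebesgue-almost every t ∈ [0,T]. Then E|F_{n,T}(x) − F_T(x)| → 0 as n → ∞, where F_{n,T}(x) = (1/T)·Leb{t ∈ [0,T] : V̂ⁿ_t ≤ x} and F_T(x) = (1/T)·Leb{t ∈ [0,T] : V_t ≤ x}; in particular F_{n,T}(x) → F_T(x) in probability. -/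

import Mathlib

/-!
On the event `Dₙ = {V̂ⁿ ≤ x} ∆ {V ≤ x} ⊆ [0,T] × Ω`, and only there, the two indicators differ,
so `|F_{n,T} − F_T|(ω)` is at most the time-measure of the `ω`-section of `Dₙ`, and by Tonelli
`E|F_{n,T} − F_T| ≤ ∫ P(Dₙ(t)) dt / T`. For fixed `t`, crossing the level `x` forces either
`|V̂ⁿ_t − V_t| ≥ ε` or `|V_t − x| < ε`; the first has vanishing probability, the second has
probability close to `P(V_t = x) = 0` for small `ε`. Hence `P(Dₙ(t)) → 0` for a.e. `t`, and
dominated convergence gives the `L¹` limit, which implies convergence in probability.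
-/

open MeasureTheory Filter ProbabilityTheory Topology
open scoped ENNReal symmDiff

theorem le_dist_of_not_iff_le {a b x ε : ℝ} (h : ¬(a ≤ x ↔ b ≤ x)) (hb : ε ≤ |b - x|) :
    ε ≤ dist a b := by
  rw [Real.dist_eq]
  grind

section

variable {β Ω : Type*} [MeasurableSpace β] [MeasurableSpace Ω]

theorem tendsto_measure_abs_sub_lt {μ : Measure Ω} [IsFiniteMeasure μ] {Z : Ω → ℝ}
    (hZ : Measurable Z) (x : ℝ) :
    Tendsto (fun ε => μ {ω | |Z ω - x| < ε}) (𝓝[>] 0) (𝓝 (μ {ω | Z ω = x})) := by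
  have h := tendsto_measure_biInter_gt (μ := μ) (s := fun ε : ℝ => {ω | |Z ω - x| < ε}) (a := 0)
    (fun r _ => (measurableSet_lt (by fun_prop) measurable_const).nullMeasurableSet)
    (fun i j _ hij ω hω => lt_of_lt_of_le hω hij) ⟨1, one_pos, measure_ne_top _ _⟩
  have hset : ⋂ r > (0:ℝ), {ω | |Z ω - x| < r} = {ω | Z ω = x} := by
    ext ω
    simp only [Set.mem_iInter, Set.mem_ofPred_eq]
    constructor
    · intro h
      by_contra hne
      exact lt_irrefl _ (h _ (abs_pos.2 (sub_ne_zero.2 hne)))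
    · intro h r hr
      simpa [h] using hr
  rwa [hset] at h

theorem tendsto_measure_symmDiff_setOf_le {ι : Type*} {l : Filter ι} {μ : Measure Ω}
    [IsFiniteMeasure μ] {Y : ι → Ω → ℝ} {Z : Ω → ℝ} (hZ : Measurable Z) {x : ℝ}
    (hYZ : TendstoInMeasure μ Y l Z) (hx : μ {ω | Z ω = x} = 0) :
    Tendsto (fun i => μ ({ω | Y i ω ≤ x} ∆ {ω | Z ω ≤ x})) l (𝓝 0) := by
  refine ENNReal.tendsto_nhds_zero.2 fun δ hδ => ?_
  have hδ2 : 0 < δ / 2 := ENNReal.half_pos hδ.ne'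
  obtain ⟨ε, hε_small, hε⟩ : ∃ ε, μ {ω | |Z ω - x| < ε} < δ / 2 ∧ 0 < ε :=
    (((tendsto_measure_abs_sub_lt hZ x).eventually (gt_mem_nhds (hx ▸ hδ2))).and
      self_mem_nhdsWithin).exists
  filter_upwards [ENNReal.tendsto_nhds_zero.1 (hYZ (ENNReal.ofReal ε) (by simpa)) (δ / 2) hδ2]
    with i hi
  have hsub : {ω | Y i ω ≤ x} ∆ {ω | Z ω ≤ x} ⊆
      {ω | ENNReal.ofReal ε ≤ edist (Y i ω) (Z ω)} ∪ {ω | |Z ω - x| < ε} := by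
    intro ω hω
    by_cases hZx : |Z ω - x| < ε
    · exact Or.inr hZx
    · rw [Set.mem_symmDiff] at hω
      refine Or.inl ?_
      rw [Set.mem_ofPred_eq, edist_dist]
      exact ENNReal.ofReal_le_ofReal (le_dist_of_not_iff_le (by tauto) (not_lt.1 hZx))
  calc _ ≤ _ := measure_mono hsub
    _ ≤ _ := measure_union_le _ _
    _ ≤ δ / 2 + δ / 2 := add_le_add hi hε_small.le
    _ = δ := ENNReal.add_halves δ

/-- With `ν = volume[|Icc 0 T]`, the uniform distribution on `[0, T]`, this is the paper's
`F_T^f(x)(ω)`. -/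
def edf (ν : Measure β) (f : β → Ω → ℝ) (x : ℝ) (ω : Ω) : ℝ :=
  ν.real {t | f t ω ≤ x}

theorem measurable_edf (ν : Measure β) [SFinite ν] {f : β → Ω → ℝ}
    (hf : Measurable (Function.uncurry f)) (x : ℝ) : Measurable (edf ν f x) :=
  (measurable_measure_prodMk_right (measurableSet_le hf measurable_const)).ennreal_toReal

theorem lintegral_enorm_edf_sub_le (ν : Measure β) [IsFiniteMeasure ν] (P : Measure Ω) [SFinite P]
    {f g : β → Ω → ℝ} (hf : Measurable (Function.uncurry f))
    (hg : Measurable (Function.uncurry g)) (x : ℝ) :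
    ∫⁻ ω, ‖edf ν f x ω - edf ν g x ω‖ₑ ∂P ≤
      ∫⁻ t, P ({ω | f t ω ≤ x} ∆ {ω | g t ω ≤ x}) ∂ν := by
  set D := {p : β × Ω | Function.uncurry f p ≤ x} ∆ {p | Function.uncurry g p ≤ x}
  have hD : MeasurableSet D :=
    (measurableSet_le hf measurable_const).symmDiff (measurableSet_le hg measurable_const)
  calc ∫⁻ ω, ‖edf ν f x ω - edf ν g x ω‖ₑ ∂P ≤ ∫⁻ ω, ν ((fun t => (t, ω)) ⁻¹' D) ∂P := by
        refine lintegral_mono fun ω => ?_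
        rw [Real.enorm_eq_ofReal_abs, ← ofReal_measureReal]
        exact ENNReal.ofReal_le_ofReal (abs_measureReal_sub_le_measureReal_symmDiff
          (measurableSet_le (hf.comp measurable_prodMk_right) measurable_const).nullMeasurableSet
          (measurableSet_le (hg.comp measurable_prodMk_right) measurable_const).nullMeasurableSet)
    _ = ν.prod P D := (Measure.prod_apply_symm hD).symm
    _ = ∫⁻ t, P (Prod.mk t ⁻¹' D) ∂ν := Measure.prod_apply hD

theorem tendsto_eLpNorm_edf_sub {ι : Type*} {l : Filter ι} [l.IsCountablyGenerated]
    (ν : Measure β) [IsFiniteMeasure ν] (P : Measure Ω) [IsFiniteMeasure P]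
    {f : ι → β → Ω → ℝ} {g : β → Ω → ℝ} (hf : ∀ i, Measurable (Function.uncurry (f i)))
    (hg : Measurable (Function.uncurry g)) {x : ℝ}
    (hconv : ∀ᵐ t ∂ν, TendstoInMeasure P (fun i => f i t) l (g t))
    (hatom : ∀ᵐ t ∂ν, P {ω | g t ω = x} = 0) :
    Tendsto (fun i => eLpNorm (edf ν (f i) x - edf ν g x) 1 P) l (𝓝 0) := by
  have hdom : Tendsto (fun i => ∫⁻ t, P ({ω | f i t ω ≤ x} ∆ {ω | g t ω ≤ x}) ∂ν) l (𝓝 0) := by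
    simpa using tendsto_lintegral_filter_of_dominated_convergence (μ := ν) (f := 0)
      (fun _ => P Set.univ)
      (Eventually.of_forall fun i => measurable_measure_prodMk_left
        ((measurableSet_le (hf i) measurable_const).symmDiff
          (measurableSet_le hg measurable_const)))
      (Eventually.of_forall fun i => ae_of_all _ fun t => measure_mono (Set.subset_univ _))
      (by simp [lintegral_const, ENNReal.mul_eq_top])
      (by
        filter_upwards [hconv, hatom] with t ht hx
        exact tendsto_measure_symmDiff_setOf_le (hg.comp measurable_prodMk_left) ht hx)
  refine tendsto_of_tendsto_of_tendsto_of_le_of_le tendsto_const_nhds hdom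
    (fun _ => zero_le) fun i => ?_
  rw [eLpNorm_one_eq_lintegral_enorm]
  exact lintegral_enorm_edf_sub_le ν P (hf i) hg x

theorem tendsto_integral_norm_of_tendsto_eLpNorm_one {ι E : Type*} [NormedAddCommGroup E]
    {l : Filter ι} {μ : Measure Ω} {h : ι → Ω → E} (hm : ∀ i, AEStronglyMeasurable (h i) μ)
    (hh : Tendsto (fun i => eLpNorm (h i) 1 μ) l (𝓝 0)) :
    Tendsto (fun i => ∫ ω, ‖h i ω‖ ∂μ) l (𝓝 0) := by
  simp_rw [integral_norm_eq_lintegral_enorm (hm _), ← eLpNorm_one_eq_lintegral_enorm]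
  exact (ENNReal.tendsto_toReal ENNReal.zero_ne_top).comp hh

end

/-- Pointwise L¹-consistency step in the proof of Theorem 3.1: if the estimated
spot path converges pointwise in probability and the marginal laws have no atom
at `x` for Lebesgue-a.e. `t`, then `E|F_{n,T}(x) − F_T(x)| → 0`; in particular
`F_{n,T}(x) → F_T(x)` in probability. -/
theorem realized_edf_pointwise_L1_consistent
    (T : ℝ) (hT : 0 < T)
    (Ω : Type*) [MeasurableSpace Ω] (P : Measure Ω) [IsProbabilityMeasure P]
    (V : ℝ → Ω → ℝ) (hV : Measurable (Function.uncurry V))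
    (Vhat : ℕ → ℝ → Ω → ℝ) (hVhat : ∀ n, Measurable (Function.uncurry (Vhat n)))
    (x : ℝ)
    (hconv : ∀ t ∈ Set.Icc (0:ℝ) T,
      TendstoInMeasure P (fun n => Vhat n t) atTop (V t))
    (hnoatom : ∀ᵐ t ∂(volume.restrict (Set.Icc (0:ℝ) T)),
      P {ω | V t ω = x} = 0)
    (FT : Ω → ℝ)
    (hFT : ∀ ω, FT ω = (1 / T) * (volume {t ∈ Set.Icc (0:ℝ) T | V t ω ≤ x}).toReal)
    (FnT : ℕ → Ω → ℝ)
    (hFnT : ∀ n ω, FnT n ω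
      = (1 / T) * (volume {t ∈ Set.Icc (0:ℝ) T | Vhat n t ω ≤ x}).toReal) :
    Tendsto (fun n => ∫ ω, |FnT n ω - FT ω| ∂P) atTop (nhds 0) ∧
    TendstoInMeasure P FnT atTop FT := by
  set ν := volume[|Set.Icc (0:ℝ) T]
  have hν : ν ≪ volume.restrict (Set.Icc (0:ℝ) T) := Measure.smul_absolutelyContinuous
  have hedf (f : ℝ → Ω → ℝ) (ω : Ω) :
      (1 / T) * (volume {t ∈ Set.Icc (0:ℝ) T | f t ω ≤ x}).toReal = edf ν f x ω := by
    rw [edf, measureReal_def, cond_apply measurableSet_Icc, ENNReal.toReal_mul,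
      ENNReal.toReal_inv, Real.volume_Icc, ENNReal.toReal_ofReal (by linarith), sub_zero, one_div]
    rfl
  obtain rfl : FT = edf ν V x := funext fun ω => (hFT ω).trans (hedf V ω)
  obtain rfl : FnT = fun n => edf ν (Vhat n) x :=
    funext₂ fun n ω => (hFnT n ω).trans (hedf (Vhat n) ω)
  have hL := tendsto_eLpNorm_edf_sub ν P hVhat hV
    (hν.ae_le (ae_restrict_of_forall_mem measurableSet_Icc hconv)) (hν.ae_le hnoatom)
  have hm (n : ℕ) : AEStronglyMeasurable (edf ν (Vhat n) x) P :=
    (measurable_edf ν (hVhat n) x).aestronglyMeasurable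
  have hm' : AEStronglyMeasurable (edf ν V x) P := (measurable_edf ν hV x).aestronglyMeasurable
  exact ⟨by simpa only [Pi.sub_apply, Real.norm_eq_abs] using
      tendsto_integral_norm_of_tendsto_eLpNorm_one (fun n => (hm n).sub hm') hL,
    tendstoInMeasure_of_tendsto_eLpNorm one_ne_zero hm hm' hL⟩
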